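/- Let λ, μ, ν > 0. With ∇ the unique ℝ-bilinear map satisfying the Koszul formula for (V, h, [·,·]) and R(A,B)C := ∇_A(∇_B C) − ∇_B(∇_A C) − ∇_{[A,B]} C, the Lorentzian dual space satisfies h(R(X,Y)Y, X) = ((λ²−μ²+ν²)² + 4ν²(μ²−ν²))/(λμν)², h(R(X,Z)Z, X) = ((λ²+μ²−ν²)² − 4μ²(μ²−ν²))/(λμν)², and h(R(Y,Z)Z, Y) = −((λ²+μ²+ν²)² − 4(λ⁴+μ²ν²))/(λμν)². -/

import Mathlib

/-- The Lorentzian scalar product on `ℝ³` with `h(X,X) = −1`, `h(Y,Y) = h(Z,Z) = 1`. -/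
def hLor (v w : Fin 3 → ℝ) : ℝ := -(v 0 * w 0) + v 1 * w 1 + v 2 * w 2

/-!
An alternating bracket with `[X,Y] = a Z`, `[Z,X] = b Y`, `[Y,Z] = c X` is the cross product
rescaled componentwise by `(c, b, a)`. Evaluating the Koszul formula on the orthonormal frame then
gives `∇` explicitly: its only nonzero coefficients are `±(a+b+c)/2`, `(-a+b+c)/2` and
`(-a+b-c)/2`. The three curvatures are quadratic in `a, b, c`, and the theorem is the case
`a = 2ν/(λμ)`, `b = 2μ/(λν)`, `c = -2λ/(μν)`.
-/

local notation "ℝ³" => Fin 3 → ℝ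
local notation "e₀" => (![1, 0, 0] : ℝ³)
local notation "e₁" => (![0, 1, 0] : ℝ³)
local notation "e₂" => (![0, 0, 1] : ℝ³)

theorem vec3_eq_sum_smul_basis (v : ℝ³) : v = v 0 • e₀ + v 1 • e₁ + v 2 • e₂ := by
  ext i
  fin_cases i <;> simp

noncomputable def frameConnection (a b c : ℝ) (A B : ℝ³) : ℝ³ :=
  ![(-a + b + c) / 2 * A 1 * B 2 + (-a + b - c) / 2 * A 2 * B 1,
    (-a + b - c) / 2 * A 2 * B 0 - (a + b + c) / 2 * A 0 * B 2,
    (a + b + c) / 2 * A 0 * B 1 + (-a + b + c) / 2 * A 1 * B 0]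

def riemann (bracket nabla : ℝ³ →ₗ[ℝ] ℝ³ →ₗ[ℝ] ℝ³) (A B C : ℝ³) : ℝ³ :=
  nabla A (nabla B C) - nabla B (nabla A C) - nabla (bracket A B) C

variable {a b c : ℝ} {bracket nabla : ℝ³ →ₗ[ℝ] ℝ³ →ₗ[ℝ] ℝ³}

theorem bracket_eq_mul_crossProduct (halt : bracket.IsAlt)
    (h₀₁ : bracket e₀ e₁ = a • e₂) (h₂₀ : bracket e₂ e₀ = b • e₁) (h₁₂ : bracket e₁ e₂ = c • e₀)
    (v w : ℝ³) : bracket v w = ![c, b, a] * crossProduct v w := by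
  rw [vec3_eq_sum_smul_basis v, vec3_eq_sum_smul_basis w]
  simp only [map_add, map_smul, LinearMap.add_apply, LinearMap.smul_apply, halt.self_eq_zero,
    ← halt.neg e₀ e₁, ← halt.neg e₂ e₀, ← halt.neg e₁ e₂, h₀₁, h₂₀, h₁₂]
  ext i
  fin_cases i <;> simp only [cross_apply, Matrix.cons_val, Pi.add_apply, Pi.smul_apply,
    Pi.neg_apply, Pi.zero_apply, Pi.mul_apply, smul_eq_mul, Fin.zero_eta, Fin.mk_one,
    Fin.reduceFinMk] <;> ring

theorem nabla_eq_frameConnection (hbr : ∀ v w, bracket v w = ![c, b, a] * crossProduct v w)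
    (hKoszul : ∀ A B C, 2 * hLor (nabla A B) C =
      hLor C (bracket A B) + hLor B (bracket C A) - hLor A (bracket B C))
    (A B : ℝ³) : nabla A B = frameConnection a b c A B := by
  have h₀ := hKoszul A B e₀
  have h₁ := hKoszul A B e₁
  have h₂ := hKoszul A B e₂
  simp only [hLor, hbr, cross_apply, Pi.mul_apply, Matrix.cons_val] at h₀ h₁ h₂
  ext i
  fin_cases i <;> simp only [frameConnection, Matrix.cons_val, Fin.zero_eta, Fin.mk_one,
    Fin.reduceFinMk] <;>
    [linear_combination -h₀ / 2; linear_combination h₁ / 2; linear_combination h₂ / 2]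

theorem hLor_riemann_frame (hbr : ∀ v w, bracket v w = ![c, b, a] * crossProduct v w)
    (hnabla : ∀ A B, nabla A B = frameConnection a b c A B) :
    hLor (riemann bracket nabla e₀ e₁ e₁) e₀ =
        (a + b + c) * (-a + b + c) / 4 + a * (-a + b - c) / 2 ∧
    hLor (riemann bracket nabla e₀ e₂ e₂) e₀ =
        -((a + b + c) * (-a + b - c) / 4 + b * (-a + b + c) / 2) ∧
    hLor (riemann bracket nabla e₁ e₂ e₂) e₁ =
        c * (a + b + c) / 2 - (-a + b + c) * (-a + b - c) / 4 := by
  simp only [riemann, hbr, hnabla, cross_apply, Pi.mul_apply, frameConnection, hLor,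
    Matrix.cons_val, Pi.sub_apply]
  refine ⟨?_, ?_, ?_⟩ <;> ring

theorem sectional_curvature_lorentzian_dual_space
    (l m n : ℝ) (hl : 0 < l) (hm : 0 < m) (hn : 0 < n)
    (X Y Z : Fin 3 → ℝ) (hX : X = ![1, 0, 0]) (hY : Y = ![0, 1, 0]) (hZ : Z = ![0, 0, 1])
    (bracket : (Fin 3 → ℝ) →ₗ[ℝ] (Fin 3 → ℝ) →ₗ[ℝ] (Fin 3 → ℝ))
    (halt : ∀ v, bracket v v = 0)
    (hXY : bracket X Y = (2 * n / (l * m)) • Z)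
    (hZX : bracket Z X = (2 * m / (l * n)) • Y)
    (hYZ : bracket Y Z = -((2 * l / (m * n)) • X))
    (nabla : (Fin 3 → ℝ) →ₗ[ℝ] (Fin 3 → ℝ) →ₗ[ℝ] (Fin 3 → ℝ))
    (hKoszul : ∀ A B C, 2 * hLor (nabla A B) C =
      hLor C (bracket A B) + hLor B (bracket C A) - hLor A (bracket B C))
    (R : (Fin 3 → ℝ) → (Fin 3 → ℝ) → (Fin 3 → ℝ) → (Fin 3 → ℝ))
    (hR : ∀ A B C, R A B C = nabla A (nabla B C) - nabla B (nabla A C) - nabla (bracket A B) C) :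
    hLor (R X Y Y) X = ((l ^ 2 - m ^ 2 + n ^ 2) ^ 2 + 4 * n ^ 2 * (m ^ 2 - n ^ 2)) / (l * m * n) ^ 2 ∧
    hLor (R X Z Z) X = ((l ^ 2 + m ^ 2 - n ^ 2) ^ 2 - 4 * m ^ 2 * (m ^ 2 - n ^ 2)) / (l * m * n) ^ 2 ∧
    hLor (R Y Z Z) Y = -(((l ^ 2 + m ^ 2 + n ^ 2) ^ 2 - 4 * (l ^ 4 + m ^ 2 * n ^ 2)) / (l * m * n) ^ 2) := by
  subst hX hY hZ
  obtain rfl : R = riemann bracket nabla := by funext A B C; exact hR A B C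
  rw [← neg_smul] at hYZ
  have hbr := bracket_eq_mul_crossProduct halt hXY hZX hYZ
  obtain ⟨hXY_YX, hXZ_ZX, hYZ_ZY⟩ :=
    hLor_riemann_frame hbr (nabla_eq_frameConnection hbr hKoszul)
  rw [hXY_YX, hXZ_ZX, hYZ_ZY]
  have := hl.ne'
  have := hm.ne'
  have := hn.ne'
  refine ⟨?_, ?_, ?_⟩ <;> field_simp <;> ring
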